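/- Let d ≥ 3 and let f : ℝ^d → ℝ be a bounded non-negative Borel function with bounded support. Then the Siegel transform f̂ satisfies ‖f̂‖²_{L²(X,μ)} ≤ ‖f‖₁² + 2 (ζ(d/2)²/ζ(d)) ‖f‖₂², where ‖f‖₁, ‖f‖₂ are the L¹ and L² norms of f on ℝ^d. -/

import Mathlib

/-!
Siegel's formula identifies the mean of `f̂` with `∫ f`, so Rogers' identity bounds
`‖f̂‖₂² - (∫ f)²`. By Cauchy–Schwarz and the scaling `∫ f(a v)² dv = |a|^{-d} ∫ f²`, each Rogers
term `∫ f(p v) f(±q v) dv` is at most `(pq)^{-d/2} ‖f‖₂²`, and since `d/2 > 1` the double sum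
over `p, q ≥ 1` is at most `2 ζ(d/2)² ‖f‖₂²`. When `f̂ ∉ L²(μ)` the left-hand side is `0` by the
Bochner-integral convention.
-/

open Set MeasureTheory

noncomputable section

/-- The Riemann zeta function at a real argument, `ζ(s) = Σ_{n ≥ 1} n^{-s}`. -/
def zetaR (s : ℝ) : ℝ := ∑' n : ℕ, 1 / ((n : ℝ) + 1) ^ s

/-- The Siegel transform `f̂(Λ) = Σ_{z ∈ Λ \ {0}} f(z)` of a function `f : ℝ^d → ℝ`,
where `Λ` is a lattice (additive subgroup) of `ℝ^d`. -/
def siegel {d : ℕ} (Λ : AddSubgroup (EuclideanSpace ℝ (Fin d)))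
    (f : EuclideanSpace ℝ (Fin d) → ℝ) : ℝ :=
  ∑' z : {v : EuclideanSpace ℝ (Fin d) // v ∈ Λ ∧ v ≠ 0}, f z

open Module ProbabilityTheory

lemma zetaR_nonneg (s : ℝ) : 0 ≤ zetaR s :=
  tsum_nonneg fun _ => by positivity

lemma summable_one_div_nat_add_one_rpow {s : ℝ} (hs : 1 < s) :
    Summable fun n : ℕ => 1 / ((n : ℝ) + 1) ^ s :=
  ((Real.summable_one_div_nat_add_rpow 1 s).2 hs).congr fun n => by
    rw [abs_of_nonneg (by positivity)]

lemma tsum_tsum_le_mul_tsum_sq {T : ℕ → ℕ → ℝ} {w : ℕ → ℝ} {c : ℝ}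
    (hT : ∀ p q, 0 ≤ T p q) (hTw : ∀ p q, T p q ≤ c * w p * w q) (hw : Summable w) :
    ∑' p, ∑' q, T p q ≤ c * (∑' n, w n) ^ 2 := by
  have hrow : ∀ p, ∑' q, T p q ≤ c * (∑' n, w n) * w p := fun p => by
    have hbound : Summable fun q => c * w p * w q := hw.mul_left _
    calc ∑' q, T p q ≤ ∑' q, c * w p * w q :=
          Summable.tsum_le_tsum (hTw p) (.of_nonneg_of_le (hT p) (hTw p) hbound) hbound
      _ = c * (∑' n, w n) * w p := by rw [tsum_mul_left]; ring
  have hbound : Summable fun p => c * (∑' n, w n) * w p := hw.mul_left _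
  calc ∑' p, ∑' q, T p q ≤ ∑' p, c * (∑' n, w n) * w p :=
        Summable.tsum_le_tsum hrow
          (.of_nonneg_of_le (fun p => tsum_nonneg (hT p)) hrow hbound) hbound
    _ = c * (∑' n, w n) ^ 2 := by rw [tsum_mul_left]; ring

section Probability

variable {Ω : Type*} [MeasurableSpace Ω] {μ : Measure Ω}

lemma memLp_two_of_nonneg_of_integrable_sq {X : Ω → ℝ} (hX : ∀ ω, 0 ≤ X ω)
    (hX2 : Integrable (fun ω => X ω ^ 2) μ) : MemLp X 2 μ := by
  have hmeas : AEStronglyMeasurable X μ :=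
    (Real.continuous_sqrt.comp_aestronglyMeasurable hX2.aestronglyMeasurable).congr
      (Filter.Eventually.of_forall fun ω => Real.sqrt_sq (hX ω))
  exact (memLp_two_iff_integrable_sq hmeas).2 hX2

lemma integral_sub_integral_sq [IsProbabilityMeasure μ] {X : Ω → ℝ} (hX : MemLp X 2 μ) :
    ∫ ω, (X ω - ∫ ω', X ω' ∂μ) ^ 2 ∂μ = ∫ ω, X ω ^ 2 ∂μ - (∫ ω, X ω ∂μ) ^ 2 := by
  rw [← variance_eq_integral hX.aemeasurable, variance_eq_sub hX]
  rfl

lemma integral_mul_le_sqrt_mul_sqrt {f g : Ω → ℝ} (hf0 : 0 ≤ᵐ[μ] f) (hg0 : 0 ≤ᵐ[μ] g)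
    (hf : MemLp f 2 μ) (hg : MemLp g 2 μ) :
    ∫ ω, f ω * g ω ∂μ ≤ √(∫ ω, f ω ^ 2 ∂μ) * √(∫ ω, g ω ^ 2 ∂μ) := by
  simpa [Real.sqrt_eq_rpow] using integral_mul_le_Lp_mul_Lq_of_nonneg
    Real.HolderConjugate.two_two hf0 hg0 (by simpa using hf) (by simpa using hg)

end Probability

lemma memLp_of_bounded_of_bounded_support {E : Type*} [NormedAddCommGroup E] [ProperSpace E]
    [MeasurableSpace E] {μ : Measure E} [IsFiniteMeasureOnCompacts μ] {f : E → ℝ}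
    (hf : AEStronglyMeasurable f μ) {C R : ℝ} (hC : ∀ x, ‖f x‖ ≤ C)
    (hR : ∀ x, f x ≠ 0 → ‖x‖ ≤ R) (p : ENNReal) : MemLp f p μ := by
  refine (memLp_top_of_bound hf C (.of_forall hC)).mono_exponent_of_measure_support_ne_top
    (s := Metric.closedBall 0 R) (fun x hx => ?_) measure_closedBall_lt_top.ne le_top
  by_contra h
  exact hx (by simpa using hR x h)

section Scaling

variable {E : Type*} [NormedAddCommGroup E] [NormedSpace ℝ E] [MeasurableSpace E] [BorelSpace E]
  [FiniteDimensional ℝ E] {μ : Measure E} [μ.IsAddHaarMeasure]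

lemma sqrt_integral_sq_comp_smul (f : E → ℝ) (a : ℝ) :
    √(∫ x, f (a • x) ^ 2 ∂μ) = √(∫ x, f x ^ 2 ∂μ) / |a| ^ ((finrank ℝ E : ℝ) / 2) := by
  rw [Measure.integral_comp_smul μ (fun x => f x ^ 2), smul_eq_mul, Real.sqrt_mul (abs_nonneg _),
    abs_inv, abs_pow, Real.sqrt_inv, Real.sqrt_eq_rpow, ← Real.rpow_natCast,
    ← Real.rpow_mul (abs_nonneg a)]
  ring_nf

lemma MeasureTheory.MemLp.comp_smul {f : E → ℝ} {p : ENNReal} (hf : MemLp f p μ) {a : ℝ}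
    (ha : a ≠ 0) : MemLp (fun x => f (a • x)) p μ := by
  have hmap : MemLp f p (μ.map (a • ·)) := by
    rw [Measure.map_addHaar_smul μ ha]
    exact hf.smul_measure ENNReal.ofReal_ne_top
  exact (memLp_map_measure_iff hmap.1 (measurable_const_smul a).aemeasurable).1 hmap

lemma integral_comp_smul_mul_comp_smul_le {f g : E → ℝ} (hf0 : ∀ x, 0 ≤ f x)
    (hg0 : ∀ x, 0 ≤ g x) (hf : MemLp f 2 μ) (hg : MemLp g 2 μ) {a b : ℝ} (ha : a ≠ 0)
    (hb : b ≠ 0) :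
    ∫ x, f (a • x) * g (b • x) ∂μ ≤ √(∫ x, f x ^ 2 ∂μ) * √(∫ x, g x ^ 2 ∂μ)
      / (|a| ^ ((finrank ℝ E : ℝ) / 2) * |b| ^ ((finrank ℝ E : ℝ) / 2)) := by
  refine (integral_mul_le_sqrt_mul_sqrt (.of_forall fun x => hf0 _) (.of_forall fun x => hg0 _)
    (hf.comp_smul ha) (hg.comp_smul hb)).trans_eq ?_
  rw [sqrt_integral_sq_comp_smul, sqrt_integral_sq_comp_smul, div_mul_div_comm]

lemma tsum_tsum_integral_comp_smul_mul_le (hn : 2 < finrank ℝ E) {f : E → ℝ}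
    (hf0 : ∀ x, 0 ≤ f x) (hf : MemLp f 2 μ) :
    ∑' (p : ℕ) (q : ℕ), ((∫ x, f (((p : ℝ) + 1) • x) * f (((q : ℝ) + 1) • x) ∂μ)
        + ∫ x, f (((p : ℝ) + 1) • x) * f (-(((q : ℝ) + 1) • x)) ∂μ)
      ≤ 2 * zetaR ((finrank ℝ E : ℝ) / 2) ^ 2 * ∫ x, f x ^ 2 ∂μ := by
  set w : ℕ → ℝ := fun n => 1 / ((n : ℝ) + 1) ^ ((finrank ℝ E : ℝ) / 2)
  set S := ∫ x, f x ^ 2 ∂μ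
  have hw : Summable w := summable_one_div_nat_add_one_rpow <| by
    have : (2 : ℝ) < finrank ℝ E := by exact_mod_cast hn
    linarith
  have hterm : ∀ (p q : ℕ) (b : ℝ), |b| = q + 1 →
      ∫ x, f (((p : ℝ) + 1) • x) * f (b • x) ∂μ ≤ S * w p * w q := fun p q b hb => by
    refine (integral_comp_smul_mul_comp_smul_le hf0 hf0 hf hf (by positivity)
      (abs_ne_zero.1 (by rw [hb]; positivity))).trans_eq ?_
    rw [hb, abs_of_pos (by positivity), Real.mul_self_sqrt (integral_nonneg fun x => sq_nonneg _)]
    ring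
  refine (tsum_tsum_le_mul_tsum_sq (c := 2 * S) (fun p q => ?_) (fun p q => ?_) hw).trans_eq
    (by unfold zetaR; ring)
  · exact add_nonneg (integral_nonneg fun x => mul_nonneg (hf0 _) (hf0 _))
      (integral_nonneg fun x => mul_nonneg (hf0 _) (hf0 _))
  · have hneg := hterm p q (-((q : ℝ) + 1)) (by rw [abs_neg, abs_of_pos (by positivity)])
    simp only [neg_smul] at hneg
    linarith [hterm p q ((q : ℝ) + 1) (abs_of_pos (by positivity))]

end Scaling

lemma siegel_nonneg {d : ℕ} (Λ : AddSubgroup (EuclideanSpace ℝ (Fin d)))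
    {f : EuclideanSpace ℝ (Fin d) → ℝ} (hf : ∀ v, 0 ≤ f v) : 0 ≤ siegel Λ f :=
  tsum_nonneg fun _ => hf _

/-- For `d ≥ 3` and `f : ℝ^d → ℝ` a bounded non-negative Borel function with bounded
support, the Siegel transform satisfies
`‖f̂‖²_{L²(X,μ)} ≤ ‖f‖₁² + 2 (ζ(d/2)²/ζ(d)) ‖f‖₂²`.
Siegel's mean value formula and Rogers' mean-square identity are assumed. -/
theorem siegel_L2_bound (d : ℕ) (hd : 3 ≤ d)
    {X : Type*} [MeasurableSpace X] (μ : Measure X) [IsProbabilityMeasure μ]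
    (lat : X → AddSubgroup (EuclideanSpace ℝ (Fin d)))
    (f : EuclideanSpace ℝ (Fin d) → ℝ) (hfmeas : Measurable f) (hfnn : ∀ v, 0 ≤ f v)
    (hfbdd : ∃ C, ∀ v, f v ≤ C) (hfsupp : ∃ R, ∀ v, f v ≠ 0 → ‖v‖ ≤ R)
    (hSiegel : ∫ x, siegel (lat x) f ∂μ = ∫ v, f v)
    (hRogers : ∫ x, (siegel (lat x) f - ∫ y, siegel (lat y) f ∂μ) ^ 2 ∂μ
      = (1 / zetaR d) * ∑' (p : ℕ) (q : ℕ),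
          ((∫ v, f (((p : ℝ) + 1) • v) * f (((q : ℝ) + 1) • v))
            + ∫ v, f (((p : ℝ) + 1) • v) * f (-(((q : ℝ) + 1) • v)))) :
    ∫ x, (siegel (lat x) f) ^ 2 ∂μ
      ≤ (∫ v, f v) ^ 2 + 2 * (zetaR ((d : ℝ) / 2)) ^ 2 / zetaR d * ∫ v, (f v) ^ 2 := by
  obtain ⟨C, hC⟩ := hfbdd
  obtain ⟨R, hR⟩ := hfsupp
  have hf2 : MemLp f 2 := memLp_of_bounded_of_bounded_support hfmeas.aestronglyMeasurable
    (fun v => (Real.norm_of_nonneg (hfnn v)).trans_le (hC v)) hR 2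
  have hsum := tsum_tsum_integral_comp_smul_mul_le (μ := volume)
    (by rw [finrank_euclideanSpace_fin]; omega) hfnn hf2
  rw [finrank_euclideanSpace_fin] at hsum
  by_cases hint : Integrable (fun x => siegel (lat x) f ^ 2) μ
  · have hvar := integral_sub_integral_sq
      (memLp_two_of_nonneg_of_integrable_sq (fun x => siegel_nonneg (lat x) hfnn) hint)
    calc ∫ x, siegel (lat x) f ^ 2 ∂μ
        = (∫ v, f v) ^ 2 + ∫ x, (siegel (lat x) f - ∫ y, siegel (lat y) f ∂μ) ^ 2 ∂μ := by
          rw [hvar, hSiegel]; ring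
      _ ≤ (∫ v, f v) ^ 2 + 1 / zetaR d * (2 * zetaR ((d : ℝ) / 2) ^ 2 * ∫ v, f v ^ 2) := by
          rw [hRogers]
          exact (add_le_add_iff_left _).2
            (mul_le_mul_of_nonneg_left hsum (one_div_nonneg.2 (zetaR_nonneg d)))
      _ = _ := by ring
  · rw [integral_undef hint]
    exact add_nonneg (sq_nonneg _) (mul_nonneg (div_nonneg (by positivity) (zetaR_nonneg d))
      (integral_nonneg fun v => sq_nonneg (f v)))
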